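/- Let G be a gyrogroup with an invariant fuzzy metric (M,*), i.e., M(a⊕x, a⊕y, t) = M(x,y,t) = M(x⊕a, y⊕a, t) for all a,x,y ∈ G, t>0. Then G with the topology induced by (M,*) is a topological gyrogroup. -/
import Mathlib


open Filter Topology

universe u

class Gyrogroup (G : Type u) where
  op : G → G → G
  e : G
  neg : G → G
  gyr : G → G → G → G
  op_left_id : ∀ x, op e x = x
  op_left_neg : ∀ x, op (neg x) x = e
  gyr_bijective : ∀ a b, Function.Bijective (gyr a b)
  gyr_op : ∀ a b x y, gyr a b (op x y) = op (gyr a b x) (gyr a b y)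
  gyrassoc : ∀ x y z, op x (op y z) = op (op x y) (gyr x y z)
  left_loop : ∀ x y, gyr (op x y) y = gyr x y

open Gyrogroup

/-- A continuous t-norm on `[0,1]`, represented as a binary operation on `ℝ`
with the t-norm axioms on `[0,1]`. -/
structure ContinuousTNorm (star : ℝ → ℝ → ℝ) : Prop where
  mem : ∀ a b, a ∈ Set.Icc (0:ℝ) 1 → b ∈ Set.Icc (0:ℝ) 1 → star a b ∈ Set.Icc (0:ℝ) 1
  comm : ∀ a b, star a b = star b a
  assoc : ∀ a b c, star (star a b) c = star a (star b c)
  one_id : ∀ a, a ∈ Set.Icc (0:ℝ) 1 → star a 1 = a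
  mono : ∀ a b c d, a ≤ c → b ≤ d → star a b ≤ star c d
  cont : ContinuousOn (fun p : ℝ × ℝ => star p.1 p.2) (Set.Icc 0 1 ×ˢ Set.Icc 0 1)

/-- A fuzzy metric in the sense of George and Veeramani. -/
structure IsFuzzyMetric {X : Type u} (M : X → X → ℝ → ℝ) (star : ℝ → ℝ → ℝ) : Prop where
  mem : ∀ x y t, 0 < t → M x y t ∈ Set.Icc (0:ℝ) 1
  pos : ∀ x y t, 0 < t → 0 < M x y t
  eq_one_iff : ∀ x y, (∀ t, 0 < t → M x y t = 1) ↔ x = y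
  symm : ∀ x y t, 0 < t → M x y t = M y x t
  tri : ∀ x y z t s, 0 < t → 0 < s → star (M x y t) (M y z s) ≤ M x z (t + s)
  cont : ∀ x y, ContinuousOn (M x y) (Set.Ioi 0)

/-- The topology induced by a fuzzy metric, generated by the open balls. -/
def fuzzyTopology {X : Type u} (M : X → X → ℝ → ℝ) : TopologicalSpace X :=
  TopologicalSpace.generateFrom
    {B | ∃ x ε t, 0 < ε ∧ ε < 1 ∧ 0 < t ∧ B = {y | 1 - ε < M x y t}}

/-! ### Basic gyrogroup identities -/

section GyroLemmas

variable {G : Type u} [Gyrogroup G]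

lemma gy_left_cancel (a : G) {x y : G} (h : op a x = op a y) : x = y := by
  have key : ∀ z : G, op (neg a) (op a z) = gyr (neg a) a z := fun z => by
    rw [gyrassoc, op_left_neg, op_left_id]
  have h2 : gyr (neg a) a x = gyr (neg a) a y := by
    rw [← key, ← key, h]
  exact (gyr_bijective (neg a) a).1 h2

lemma gy_gyr_e_left (y z : G) : gyr e y z = z := by
  have h := gyrassoc e y z
  rw [op_left_id, op_left_id] at h
  exact (gy_left_cancel y h).symm

lemma gy_gyr_neg_left (a z : G) : gyr (neg a) a z = z := by
  have h := left_loop (neg a) a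
  rw [op_left_neg] at h
  rw [← h, gy_gyr_e_left]

lemma gy_neg_op_cancel (a z : G) : op (neg a) (op a z) = z := by
  rw [gyrassoc, op_left_neg, op_left_id, gy_gyr_neg_left]

lemma gy_gyr_e (a b : G) : gyr a b e = e := by
  have hw : gyr a b e = op (gyr a b e) (gyr a b e) := by
    conv_lhs => rw [show (e : G) = op e e from (op_left_id e).symm, gyr_op]
  have h2 := gy_neg_op_cancel (gyr a b e) (gyr a b e)
  rw [← hw, op_left_neg] at h2
  exact h2.symm

lemma gy_key (a : G) : ∀ z : G, z = op (op a (neg a)) (gyr a (neg a) z) := fun z => by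
  have h1 : op a (op (neg a) z) = op (op a (neg a)) (gyr a (neg a) z) := gyrassoc a (neg a) z
  have h2 := congrArg (op (neg a)) h1
  rw [gy_neg_op_cancel] at h2
  exact gy_left_cancel (neg a) h2

lemma gy_op_neg (a : G) : op a (neg a) = e := by
  set p := op a (neg a) with hp
  have hg : ∀ z : G, gyr a (neg a) z = op (neg p) z := fun z => by
    have := congrArg (op (neg p)) (gy_key a z).symm
    rw [gy_neg_op_cancel] at this
    exact this
  have h3 : ∀ v : G, v = op (neg p) v := fun v => by
    have h := gyr_op a (neg a) p v
    rw [hg, hg, hg, gy_neg_op_cancel, op_left_neg, op_left_id] at h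
    exact h
  have h4 := h3 p
  rw [op_left_neg] at h4
  exact h4

lemma gy_gyr_self_neg (a z : G) : gyr a (neg a) z = z := by
  have h := gy_key a z
  rw [gy_op_neg, op_left_id] at h
  exact h.symm

lemma gy_op_e (a : G) : op a e = a := by
  have h := gyrassoc a (neg a) a
  rw [op_left_neg, gy_op_neg, op_left_id, gy_gyr_self_neg] at h
  exact h

lemma gy_neg_neg (a : G) : neg (neg a) = a := by
  have h := gy_neg_op_cancel (neg a) a
  rw [op_left_neg, gy_op_e] at h
  exact h

lemma gy_op_neg_cancel (a z : G) : op a (op (neg a) z) = z := by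
  have := gy_neg_op_cancel (neg a) z
  rw [gy_neg_neg] at this
  exact this

lemma gy_eq_neg {a d : G} (h : op a d = e) : d = neg a := by
  have := congrArg (op (neg a)) h
  rw [gy_neg_op_cancel, gy_op_e] at this
  exact this

lemma gy_gyr_apply (a b z : G) : gyr a b z = op (neg (op a b)) (op a (op b z)) := by
  conv_rhs => rw [gyrassoc a b z, gy_neg_op_cancel]

lemma gy_neg_op (a b : G) : neg (op a b) = gyr a b (op (neg b) (neg a)) := by
  symm
  apply gy_eq_neg
  rw [← gyrassoc, gy_op_neg_cancel, gy_op_neg]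

end GyroLemmas

/-! ### Analytic lemmas -/

lemma star_lower {star : ℝ → ℝ → ℝ} (hstar : ContinuousTNorm star) {p q η : ℝ}
    (hp : p ∈ Set.Icc (0:ℝ) 1) (hq : q ∈ Set.Icc (0:ℝ) 1) (hη : η < star p q) :
    ∃ δ > 0, ∀ a b : ℝ, a ∈ Set.Icc (0:ℝ) 1 → b ∈ Set.Icc (0:ℝ) 1 →
      dist a p < δ → dist b q < δ → η < star a b := by
  have hc : ContinuousWithinAt (fun r : ℝ × ℝ => star r.1 r.2)
      (Set.Icc 0 1 ×ˢ Set.Icc 0 1) (p, q) := hstar.cont (p, q) ⟨hp, hq⟩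
  have hmem : (fun r : ℝ × ℝ => star r.1 r.2) ⁻¹' Set.Ioi η ∈
      𝓝[Set.Icc (0:ℝ) 1 ×ˢ Set.Icc (0:ℝ) 1] (p, q) := hc (Ioi_mem_nhds hη)
  rw [Metric.mem_nhdsWithin_iff] at hmem
  obtain ⟨δ, hδ, hsub⟩ := hmem
  refine ⟨δ, hδ, fun a b ha hb hda hdb => ?_⟩
  have : (a, b) ∈ Metric.ball (p, q) δ ∩ Set.Icc (0:ℝ) 1 ×ˢ Set.Icc (0:ℝ) 1 := by
    refine ⟨?_, ha, hb⟩
    rw [Metric.mem_ball, Prod.dist_eq]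
    exact max_lt hda hdb
  exact hsub this

lemma M_self {X : Type u} {M : X → X → ℝ → ℝ} {star : ℝ → ℝ → ℝ}
    (hM : IsFuzzyMetric M star) (x : X) {t : ℝ} (ht : 0 < t) : M x x t = 1 :=
  ((hM.eq_one_iff x x).2 rfl) t ht

lemma M_left_lt {X : Type u} {M : X → X → ℝ → ℝ} {star : ℝ → ℝ → ℝ}
    (hM : IsFuzzyMetric M star) (x y : X) {t η : ℝ} (ht : 0 < t) (hη : η < M x y t) :
    ∃ t', 0 < t' ∧ t' < t ∧ η < M x y t' := by
  have hc : ContinuousAt (M x y) t := (hM.cont x y).continuousAt (Ioi_mem_nhds ht)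
  have hU : M x y ⁻¹' Set.Ioi η ∈ 𝓝 t := hc.preimage_mem_nhds (Ioi_mem_nhds hη)
  have h2 : M x y ⁻¹' Set.Ioi η ∈ 𝓝[<] t := mem_nhdsWithin_of_mem_nhds hU
  have h3 : Set.Ioo 0 t ∈ 𝓝[<] t := Ioo_mem_nhdsLT_of_mem ⟨ht, le_refl t⟩
  obtain ⟨t', ht'⟩ := Filter.nonempty_of_mem (Filter.inter_mem h2 h3)
  exact ⟨t', ht'.2.1, ht'.2.2, ht'.1⟩

/-! ### Invariance consequences -/

section MInv

variable {G : Type u} [Gyrogroup G] {M : G → G → ℝ → ℝ} {star : ℝ → ℝ → ℝ}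

lemma M_gyr (hM : IsFuzzyMetric M star)
    (hinv : ∀ a x y : G, ∀ t : ℝ, 0 < t →
      M (op a x) (op a y) t = M x y t ∧ M (op x a) (op y a) t = M x y t)
    (a b u v : G) {t : ℝ} (ht : 0 < t) :
    M (gyr a b u) (gyr a b v) t = M u v t := by
  rw [gy_gyr_apply a b u, gy_gyr_apply a b v, (hinv (neg (op a b)) _ _ t ht).1,
    (hinv a _ _ t ht).1, (hinv b u v t ht).1]

lemma M_neg (hM : IsFuzzyMetric M star)
    (hinv : ∀ a x y : G, ∀ t : ℝ, 0 < t →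
      M (op a x) (op a y) t = M x y t ∧ M (op x a) (op y a) t = M x y t)
    (x y : G) {t : ℝ} (ht : 0 < t) : M (neg x) (neg y) t = M x y t := by
  have hCe : ∀ c : G, M c e t = M (neg c) e t := fun c => by
    have h := (hinv (neg c) c e t ht).2
    rw [gy_op_neg, op_left_id] at h
    rw [← h, hM.symm e (neg c) t ht]
  have h1 := (hinv y (neg x) (neg y) t ht).2
  rw [op_left_neg] at h1
  have h2 := hCe (op (neg x) y)
  have h3 : neg (op (neg x) y) = gyr (neg x) y (op (neg y) x) := by
    rw [gy_neg_op, gy_neg_neg]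
  have h4 : M (gyr (neg x) y (op (neg y) x)) e t = M (op (neg y) x) e t := by
    conv_lhs => rw [show (e:G) = gyr (neg x) y e from (gy_gyr_e _ _).symm]
    exact M_gyr hM hinv _ _ _ _ ht
  have h5 := (hinv y (op (neg y) x) e t ht).1
  rw [gy_op_neg_cancel, gy_op_e] at h5
  rw [← h1, h2, h3, h4, ← h5]

lemma M_op_bound (hM : IsFuzzyMetric M star)
    (hinv : ∀ a x y : G, ∀ t : ℝ, 0 < t →
      M (op a x) (op a y) t = M x y t ∧ M (op x a) (op y a) t = M x y t)
    (x y a b : G) {t s : ℝ} (ht : 0 < t) (hs : 0 < s) :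
    star (M x y t) (M a b s) ≤ M (op a x) (op b y) (t + s) := by
  have h := hM.tri (op a x) (op a y) (op b y) t s ht hs
  rw [(hinv a x y t ht).1, (hinv y a b s hs).2] at h
  exact h

end MInv

theorem invariant_fuzzy_metric_topological_gyrogroup {G : Type u} [Gyrogroup G]
    (M : G → G → ℝ → ℝ) (star : ℝ → ℝ → ℝ)
    (hstar : ContinuousTNorm star) (hM : IsFuzzyMetric M star)
    (hinv : ∀ a x y : G, ∀ t : ℝ, 0 < t →
      M (op a x) (op a y) t = M x y t ∧ M (op x a) (op y a) t = M x y t) :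
    @Continuous (G × G) G
      (@instTopologicalSpaceProd G G (fuzzyTopology M) (fuzzyTopology M)) (fuzzyTopology M)
      (fun p => op p.1 p.2) ∧
    @Continuous G G (fuzzyTopology M) (fuzzyTopology M) neg := by
  letI : TopologicalSpace G := fuzzyTopology M
  have hball : ∀ (x : G) (ε t : ℝ), 0 < ε → ε < 1 → 0 < t →
      IsOpen[fuzzyTopology M] {y | 1 - ε < M x y t} := fun x ε t h1 h2 h3 =>
    TopologicalSpace.isOpen_generateFrom_of_mem ⟨x, ε, t, h1, h2, h3, rfl⟩
  constructor
  · -- continuity of op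
    apply continuous_generateFrom_iff.mpr
    rintro S ⟨x₀, ε, t, hε0, hε1, ht, rfl⟩
    rw [isOpen_iff_forall_mem_open]
    rintro ⟨a₀, b₀⟩ hp
    simp only [Set.mem_preimage, Set.mem_setOf_eq] at hp
    obtain ⟨t', ht'0, ht't, hα⟩ := M_left_lt hM x₀ (op a₀ b₀) ht hp
    have hs : 0 < t - t' := by linarith
    have hs2 : 0 < (t - t') / 2 := by linarith
    set α := M x₀ (op a₀ b₀) t' with hαdef
    have hα1 : star α 1 = α := hstar.one_id α (hM.mem _ _ _ ht'0)
    obtain ⟨δ₁, hδ₁, H₁⟩ := star_lower hstar (hM.mem x₀ (op a₀ b₀) t' ht'0)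
      (Set.mem_Icc.2 ⟨zero_le_one, le_refl 1⟩) (by rw [hα1]; exact hα)
    have h11 : star (1:ℝ) 1 = 1 := hstar.one_id 1 ⟨zero_le_one, le_refl 1⟩
    obtain ⟨δ₂, hδ₂, H₂⟩ := star_lower hstar (Set.mem_Icc.2 ⟨zero_le_one, le_refl 1⟩)
      (Set.mem_Icc.2 ⟨zero_le_one, le_refl 1⟩)
      (show 1 - δ₁ < star (1:ℝ) 1 by rw [h11]; linarith)
    set ε' := min δ₂ 1 / 2 with hε'def
    have hε'0 : 0 < ε' := by
      have := lt_min hδ₂ one_pos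
      simp only [hε'def]
      positivity
    have hε'1 : ε' < 1 := by
      have := min_le_right δ₂ 1
      simp only [hε'def]; linarith
    have hε'δ₂ : ε' ≤ δ₂ := by
      have := min_le_left δ₂ 1
      simp only [hε'def]; linarith
    have hdist : ∀ q : ℝ, q ∈ Set.Icc (0:ℝ) 1 → 1 - ε' < q → dist q 1 < δ₂ := by
      intro q hqm hq
      rw [Real.dist_eq, abs_of_nonpos (by linarith [hqm.2])]
      linarith
    refine ⟨{a | 1 - ε' < M a₀ a ((t - t') / 2)} ×ˢ {b | 1 - ε' < M b₀ b ((t - t') / 2)},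
      ?_, IsOpen.prod (hball _ _ _ hε'0 hε'1 hs2) (hball _ _ _ hε'0 hε'1 hs2), ?_⟩
    · rintro ⟨a, b⟩ ⟨ha, hb⟩
      simp only [Set.mem_setOf_eq] at ha hb
      simp only [Set.mem_preimage, Set.mem_setOf_eq]
      have h5 := M_op_bound hM hinv b₀ b a₀ a hs2 hs2
      rw [add_halves] at h5
      have h6 := H₂ _ _ (hM.mem b₀ b _ hs2) (hM.mem a₀ a _ hs2)
        (hdist _ (hM.mem _ _ _ hs2) hb) (hdist _ (hM.mem _ _ _ hs2) ha)
      have hq : 1 - δ₁ < M (op a₀ b₀) (op a b) (t - t') := lt_of_lt_of_le h6 h5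
      have hqm := hM.mem (op a₀ b₀) (op a b) (t - t') hs
      have h7 := hM.tri x₀ (op a₀ b₀) (op a b) t' (t - t') ht'0 hs
      rw [show t' + (t - t') = t by ring] at h7
      have h8 := H₁ α (M (op a₀ b₀) (op a b) (t - t')) (hM.mem _ _ _ ht'0) hqm
        (by rw [dist_self]; exact hδ₁)
        (by rw [Real.dist_eq, abs_of_nonpos (by linarith [hqm.2])]; linarith)
      linarith
    · exact ⟨by simp only [Set.mem_setOf_eq, M_self hM a₀ hs2]; linarith,
        by simp only [Set.mem_setOf_eq, M_self hM b₀ hs2]; linarith⟩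
  · -- continuity of neg
    apply continuous_generateFrom_iff.mpr
    rintro S ⟨x₀, ε, t, hε0, hε1, ht, rfl⟩
    have heq : neg ⁻¹' {y | 1 - ε < M x₀ y t} = {y : G | 1 - ε < M (neg x₀) y t} := by
      ext a
      simp only [Set.mem_preimage, Set.mem_setOf_eq]
      rw [show M x₀ (neg a) t = M (neg x₀) a t from by
        have h := M_neg hM hinv x₀ (neg a) ht
        rw [gy_neg_neg] at h
        exact h.symm]
    rw [heq]
    exact hball _ _ _ hε0 hε1 ht
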